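/- arXiv:2203.09703 — 5 statements merged into one kernel-verified Lean document; each statement's English description precedes it below -/
import Mathlib

section
/- Let f : R^n → R be differentiable and quasiconvex, let C ⊂ R^n be a nonempty finite set, and let x* ∈ C maximize f over C. Then ∇f(x*) belongs to the normal cone N_C(x*) = {v : ⟨v, y − x*⟩ ≤ 0 for all y ∈ C}. -/
/-!
The sublevel set `{z | f z ≤ f x*}` of a quasiconvex function is convex and contains `x*` and `y`,
hence the whole segment `[x*, y]`. So `x*` maximizes `f` on that segment, and the derivative of `f`
at `x*` in the direction `y - x*`, which is tangent to the segment, cannot be positive.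
-/

open scoped RealInnerProductSpace

section

variable {E : Type*} [NormedAddCommGroup E]

theorem QuasiconvexOn.fderiv_sub_nonpos_of_le [NormedSpace ℝ E] {s : Set E} {f : E → ℝ}
    {f' : E →L[ℝ] ℝ} {x y : E} (hf : QuasiconvexOn ℝ s f) (hx : x ∈ s) (hy : y ∈ s)
    (hf' : HasFDerivAt f f' x) (hyx : f y ≤ f x) : f' (y - x) ≤ 0 := by
  have hseg : segment ℝ x y ⊆ {z ∈ s | f z ≤ f x} :=
    (hf (f x)).segment_subset ⟨hx, le_rfl⟩ ⟨hy, hyx⟩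
  have hmax : IsLocalMaxOn f (segment ℝ x y) x :=
    IsMaxOn.localize fun z hz => (hseg hz).2
  exact hmax.hasFDerivWithinAt_nonpos hf'.hasFDerivWithinAt
    (sub_mem_posTangentConeAt_of_segment_subset subset_rfl)

theorem QuasiconvexOn.inner_gradient_sub_nonpos_of_le [InnerProductSpace ℝ E] [CompleteSpace E]
    {s : Set E} {f : E → ℝ} {g x y : E} (hf : QuasiconvexOn ℝ s f) (hx : x ∈ s) (hy : y ∈ s)
    (hg : HasGradientAt f g x) (hyx : f y ≤ f x) : ⟪g, y - x⟫ ≤ 0 :=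
  hf.fderiv_sub_nonpos_of_le hx hy hg.hasFDerivAt hyx

end

theorem gradient_mem_normalCone_of_finite_max_general (n : ℕ)
    (f : EuclideanSpace ℝ (Fin n) → ℝ)
    (hdiff : Differentiable ℝ f)
    (hf : QuasiconvexOn ℝ Set.univ f)
    (C : Finset (EuclideanSpace ℝ (Fin n)))
    (xs : EuclideanSpace ℝ (Fin n))
    (hmax : ∀ y ∈ C, f y ≤ f xs) :
    ∀ y ∈ C, ⟪gradient f xs, y - xs⟫ ≤ 0 := fun y hy =>
  hf.inner_gradient_sub_nonpos_of_le trivial trivial (hdiff xs).hasGradientAt (hmax y hy)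

/-- If a differentiable quasiconvex function attains its maximum over a nonempty finite
set `C` at `x*`, then its gradient at `x*` lies in the normal cone of `C` at `x*`. -/
theorem gradient_mem_normalCone_of_finite_max (n : ℕ)
    (f : EuclideanSpace ℝ (Fin n) → ℝ)
    (hdiff : Differentiable ℝ f)
    (hf : QuasiconvexOn ℝ Set.univ f)
    (C : Finset (EuclideanSpace ℝ (Fin n))) (hC : C.Nonempty)
    (xs : EuclideanSpace ℝ (Fin n)) (hxs : xs ∈ C)
    (hmax : ∀ y ∈ C, f y ≤ f xs) :
    ∀ y ∈ C, ⟪gradient f xs, y - xs⟫ ≤ 0 :=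
  gradient_mem_normalCone_of_finite_max_general n f hdiff hf C xs hmax
end

section
/- Sufficiency of KKT conditions under pseudoconvexity: Let f, g_1, …, g_m : R^n → R be differentiable, with −f pseudoconvex and each g_j quasiconvex. Let D ⊂ R^n be nonempty and C := {x ∈ D : g_j(x) ≤ 0, j = 1,…,m}. Suppose x* ∈ C and there exist λ_1, …, λ_m ≥ 0 with λ_j g_j(x*) = 0 for all j and ∇f(x*) ∈ N_D(x*) + λ_1 ∇g_1(x*) + ⋯ + λ_m ∇g_m(x*). Then f(x*) ≥ f(x) for all x ∈ C. -/
/-!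
If `f x > f xs` for a feasible `x`, pseudoconvexity of `-f` gives `⟪∇f xs, x - xs⟫ > 0`.
The KKT decomposition of `∇f xs` forces the opposite sign: the normal-cone part pairs
nonpositively with `x - xs`, and so does each multiplier term, since a positive multiplier
makes its constraint active and a quasiconvex function cannot increase from `xs` towards a
point where it is not larger.
-/

open scoped RealInnerProductSpace

section Quasiconvex

variable {E : Type*} [NormedAddCommGroup E] [NormedSpace ℝ E] {s : Set E} {g : E → ℝ} {x y : E}

theorem QuasiconvexOn.fderiv_sub_nonpos (hg : QuasiconvexOn ℝ s g)
    (hdiff : DifferentiableAt ℝ g y) (hx : x ∈ s) (hy : y ∈ s) (hxy : g x ≤ g y) :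
    fderiv ℝ g y (x - y) ≤ 0 := by
  -- the sublevel set `{g ≤ g y}` is convex and contains `x` and `y`
  have hmax : IsMaxOn g (segment ℝ y x) y := fun z hz =>
    ((hg (g y)).segment_subset ⟨hy, le_rfl⟩ ⟨hx, hxy⟩ hz).2
  exact hmax.localize.hasFDerivWithinAt_nonpos hdiff.hasFDerivAt.hasFDerivWithinAt
    (sub_mem_posTangentConeAt_of_segment_subset subset_rfl)

end Quasiconvex

section InnerProduct

variable {E : Type*} [NormedAddCommGroup E] [InnerProductSpace ℝ E]

theorem inner_sub_nonpos_of_eq_add_sum {ι : Type*} (t : Finset ι) {w v d : E} {u : ι → E}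
    {lam : ι → ℝ} (hw : w = v + ∑ j ∈ t, lam j • u j) (hv : ⟪v, d⟫ ≤ 0)
    (hu : ∀ j ∈ t, lam j * ⟪u j, d⟫ ≤ 0) : ⟪w, d⟫ ≤ 0 := by
  have hsum : ∑ j ∈ t, lam j * ⟪u j, d⟫ ≤ 0 := Finset.sum_nonpos hu
  calc ⟪w, d⟫ = ⟪v, d⟫ + ∑ j ∈ t, lam j * ⟪u j, d⟫ := by
        simp only [hw, inner_add_left, sum_inner, real_inner_smul_left]
    _ ≤ 0 := by linarith

variable [CompleteSpace E]

theorem QuasiconvexOn.inner_gradient_sub_nonpos {s : Set E} {g : E → ℝ} {x y : E}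
    (hg : QuasiconvexOn ℝ s g) (hdiff : DifferentiableAt ℝ g y) (hx : x ∈ s) (hy : y ∈ s)
    (hxy : g x ≤ g y) : ⟪gradient g y, x - y⟫ ≤ 0 := by
  rw [gradient, InnerProductSpace.toDual_symm_apply]
  exact hg.fderiv_sub_nonpos hdiff hx hy hxy

theorem mul_inner_gradient_sub_nonpos_of_complementary {g : E → ℝ} {lam : ℝ} {x xs : E}
    (hg : QuasiconvexOn ℝ Set.univ g) (hdiff : DifferentiableAt ℝ g xs) (hlam : 0 ≤ lam)
    (hcomp : lam * g xs = 0) (hx : g x ≤ 0) :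
    lam * ⟪gradient g xs, x - xs⟫ ≤ 0 := by
  rcases hlam.eq_or_lt with rfl | hpos
  · simp
  have hactive : g xs = 0 := (mul_eq_zero.mp hcomp).resolve_left hpos.ne'
  exact mul_nonpos_of_nonneg_of_nonpos hlam <|
    hg.inner_gradient_sub_nonpos hdiff trivial trivial (hactive ▸ hx)

end InnerProduct

theorem kkt_sufficient_pseudoconvex_general (n m : ℕ)
    (f : EuclideanSpace ℝ (Fin n) → ℝ)
    (g : Fin m → EuclideanSpace ℝ (Fin n) → ℝ)
    (hgdiff : ∀ j, Differentiable ℝ (g j))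
    -- pseudoconvexity of -f : f(x) > f(y) implies ⟨∇f(y), x - y⟩ > 0
    (hpseudo : ∀ x y : EuclideanSpace ℝ (Fin n), f y < f x → 0 < ⟪gradient f y, x - y⟫)
    (hquasi : ∀ j, QuasiconvexOn ℝ Set.univ (g j))
    (D : Set (EuclideanSpace ℝ (Fin n)))
    (xs : EuclideanSpace ℝ (Fin n))
    (lam : Fin m → ℝ) (hlam : ∀ j, 0 ≤ lam j)
    (hcomp : ∀ j, lam j * g j xs = 0)
    (hkkt : ∃ v : EuclideanSpace ℝ (Fin n), (∀ y ∈ D, ⟪v, y - xs⟫ ≤ 0) ∧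
      gradient f xs = v + ∑ j, lam j • gradient (g j) xs) :
    ∀ x ∈ D, (∀ j, g j x ≤ 0) → f x ≤ f xs := by
  intro x hxD hxfeas
  obtain ⟨v, hnormal, hgrad⟩ := hkkt
  have hdescent : ⟪gradient f xs, x - xs⟫ ≤ 0 :=
    inner_sub_nonpos_of_eq_add_sum _ hgrad (hnormal x hxD) fun j _ =>
      mul_inner_gradient_sub_nonpos_of_complementary (hquasi j) (hgdiff j xs) (hlam j)
        (hcomp j) (hxfeas j)
  by_contra! hlt
  exact (hpseudo x xs hlt).not_ge hdescent

/-- Sufficiency of the KKT conditions when `-f` is pseudoconvex and the constraint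
functions are quasiconvex. -/
theorem kkt_sufficient_pseudoconvex (n m : ℕ)
    (f : EuclideanSpace ℝ (Fin n) → ℝ)
    (g : Fin m → EuclideanSpace ℝ (Fin n) → ℝ)
    (hfdiff : Differentiable ℝ f)
    (hgdiff : ∀ j, Differentiable ℝ (g j))
    -- pseudoconvexity of -f : f(x) > f(y) implies ⟨∇f(y), x - y⟩ > 0
    (hpseudo : ∀ x y : EuclideanSpace ℝ (Fin n), f y < f x → 0 < ⟪gradient f y, x - y⟫)
    (hquasi : ∀ j, QuasiconvexOn ℝ Set.univ (g j))
    (D : Set (EuclideanSpace ℝ (Fin n))) (hD : D.Nonempty)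
    (xs : EuclideanSpace ℝ (Fin n))
    (hxsD : xs ∈ D) (hxsfeas : ∀ j, g j xs ≤ 0)
    (lam : Fin m → ℝ) (hlam : ∀ j, 0 ≤ lam j)
    (hcomp : ∀ j, lam j * g j xs = 0)
    (hkkt : ∃ v : EuclideanSpace ℝ (Fin n), (∀ y ∈ D, ⟪v, y - xs⟫ ≤ 0) ∧
      gradient f xs = v + ∑ j, lam j • gradient (g j) xs) :
    ∀ x ∈ D, (∀ j, g j x ≤ 0) → f x ≤ f xs :=
  kkt_sufficient_pseudoconvex_general n m f g hgdiff hpseudo hquasi D xs lam hlam hcomp hkkt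
end

section
/- Let N ∈ {0,…,n}, f : R^n → R differentiable, C ⊂ {0,1}^n finite nonempty, and x ∈ C with ∇f(x) ≠ 0. Suppose (max_{y∈C} f(y) − f(x)) / ‖∇f(x)‖ > √N. Then any z ∈ {0,1}^n satisfying max_{y∈C} f(y) − f(x) ≤ ⟨∇f(x), z − x⟩ must satisfy ‖z − x‖ > √N; consequently, the number of binary vectors z ∈ {0,1}^n violating the linear inequality ⟨∇f(x), z − x⟩ ≥ max_{y∈C} f(y) − f(x) is at least ∑_{q=0}^{N} C(n, q). -/
/-!
By Cauchy–Schwarz, a point `z` kept by the cut satisfies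
`√N ‖∇f(x)‖ < Mv - f x ≤ ⟪∇f(x), z - x⟫ ≤ ‖∇f(x)‖ ‖z - x‖`, so it lies at distance more than `√N`
from `x`. Between binary vectors the Euclidean distance is the square root of the Hamming distance,
so the cut removes the whole Hamming ball of radius `N` around `x`, which has `∑_{q ≤ N} C(n, q)`
points.
-/

open scoped RealInnerProductSpace

/-- Embedding of binary vectors into Euclidean space. -/
noncomputable def binVec {n : ℕ} (b : Fin n → Bool) : EuclideanSpace ℝ (Fin n) :=
  WithLp.toLp 2 (fun i => if b i then (1 : ℝ) else 0)

open Finset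

theorem lt_norm_of_lt_div_norm_of_le_inner {E : Type*} [NormedAddCommGroup E]
    [InnerProductSpace ℝ E] {g v : E} {r c : ℝ} (hr : r < c / ‖g‖) (hc : c ≤ ⟪g, v⟫) :
    r < ‖v‖ := by
  rcases (norm_nonneg g).eq_or_lt with hg_zero | hg_pos
  · rw [← hg_zero, div_zero] at hr
    exact hr.trans_le (norm_nonneg v)
  · calc r < c / ‖g‖ := hr
      _ ≤ ‖g‖ * ‖v‖ / ‖g‖ := by gcongr; exact hc.trans (real_inner_le_norm g v)
      _ = ‖v‖ := by field_simp

theorem card_filter_card_le_eq_sum_choose (α : Type*) [Fintype α] [DecidableEq α] (N : ℕ) :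
    #{s : Finset α | #s ≤ N} = ∑ q ∈ range (N + 1), (Fintype.card α).choose q := by
  rw [card_eq_sum_card_fiberwise (f := card) (t := range (N + 1))
    (fun s hs => mem_range_succ_iff.mpr (mem_filter.mp hs).2)]
  refine sum_congr rfl fun q hq => ?_
  rw [← card_univ, ← card_powersetCard, powersetCard_eq_filter, powerset_univ, filter_filter]
  congr 1
  exact filter_congr fun s _ => ⟨fun h => h.2, fun h => ⟨h ▸ mem_range_succ_iff.mp hq, h⟩⟩

/-- The Hamming ball of radius `N` around `b₀` is in bijection with the subsets of size at most
`N`, a subset recording the coordinates at which `b₀` is flipped. -/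
theorem card_hammingDist_le_eq_sum_choose {α : Type*} [Fintype α] [DecidableEq α]
    (b₀ : α → Bool) (N : ℕ) :
    #{b : α → Bool | hammingDist b b₀ ≤ N} =
      ∑ q ∈ range (N + 1), (Fintype.card α).choose q := by
  rw [← card_filter_card_le_eq_sum_choose]
  have flipped_coords (s : Finset α) :
      ({i | xor (decide (i ∈ s)) (b₀ i) ≠ b₀ i} : Finset α) = s := by
    ext i
    by_cases hi : i ∈ s <;> cases b₀ i <;> simp [hi]
  refine card_nbij' (fun b => ({i | b i ≠ b₀ i} : Finset α))
    (fun (s : Finset α) i => xor (decide (i ∈ s)) (b₀ i)) ?_ ?_ ?_ ?_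
  · intro b hb
    simpa [hammingDist] using hb
  · intro s hs
    simpa [hammingDist, flipped_coords] using hs
  · intro b _
    ext i
    cases hb : b i <;> cases hb₀ : b₀ i <;> simp [hb, hb₀]
  · intro s _
    exact flipped_coords s

theorem norm_binVec_sub_binVec {n : ℕ} (b c : Fin n → Bool) :
    ‖binVec b - binVec c‖ = √(hammingDist b c) := by
  rw [EuclideanSpace.norm_eq, hammingDist, card_filter]
  push_cast
  congr 1
  refine sum_congr rfl fun i _ => ?_
  cases hb : b i <;> cases hc : c i <;> simp [binVec, hb, hc]

theorem exists_binVec_eq {n : ℕ} {x : EuclideanSpace ℝ (Fin n)}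
    (hx : ∀ i, x i = 0 ∨ x i = 1) : ∃ b, binVec b = x :=
  ⟨fun i => decide (x i = 1), by ext i; rcases hx i with h | h <;> simp [binVec, h]⟩

theorem optimality_cut_removes_points_general (n N : ℕ)
    (f : EuclideanSpace ℝ (Fin n) → ℝ)
    (C : Finset (EuclideanSpace ℝ (Fin n)))
    (hCbin : ∀ y ∈ C, ∀ i, y i = 0 ∨ y i = 1)
    (x : EuclideanSpace ℝ (Fin n)) (hx : x ∈ C)
    (Mv : ℝ)
    (hratio : Real.sqrt N < (Mv - f x) / ‖gradient f x‖) :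
    (∀ z : EuclideanSpace ℝ (Fin n), (∀ i, z i = 0 ∨ z i = 1) →
        Mv - f x ≤ ⟪gradient f x, z - x⟫ → Real.sqrt N < ‖z - x‖) ∧
    ∑ q ∈ Finset.range (N + 1), Nat.choose n q ≤
      (Finset.univ.filter
        (fun b : Fin n → Bool => ⟪gradient f x, binVec b - x⟫ < Mv - f x)).card := by
  have cut_far (z : EuclideanSpace ℝ (Fin n)) (hz : Mv - f x ≤ ⟪gradient f x, z - x⟫) :
      √N < ‖z - x‖ :=
    lt_norm_of_lt_div_norm_of_le_inner hratio hz
  refine ⟨fun z _ => cut_far z, ?_⟩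
  obtain ⟨b₀, rfl⟩ := exists_binVec_eq (hCbin x hx)
  calc ∑ q ∈ range (N + 1), n.choose q = #{b : Fin n → Bool | hammingDist b b₀ ≤ N} := by
        rw [card_hammingDist_le_eq_sum_choose, Fintype.card_fin]
    _ ≤ _ := card_le_card fun b hb => mem_filter.mpr ⟨mem_univ b, ?_⟩
  by_contra! hcut
  have hfar := cut_far _ hcut
  rw [norm_binVec_sub_binVec] at hfar
  exact hfar.not_ge (Real.sqrt_le_sqrt (by exact_mod_cast (mem_filter.mp hb).2))

/-- If `(max_C f − f(x))/‖∇f(x)‖ > √N`, then every binary vector satisfying the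
optimality cut is at distance more than `√N` from `x`, and the cut removes at least
`∑_{q=0}^N C(n,q)` binary vectors. -/
theorem optimality_cut_removes_points (n N : ℕ) (hN : N ≤ n)
    (f : EuclideanSpace ℝ (Fin n) → ℝ) (hdiff : Differentiable ℝ f)
    (C : Finset (EuclideanSpace ℝ (Fin n))) (hCne : C.Nonempty)
    (hCbin : ∀ y ∈ C, ∀ i, y i = 0 ∨ y i = 1)
    (x : EuclideanSpace ℝ (Fin n)) (hx : x ∈ C)
    (hgrad : gradient f x ≠ 0)
    (Mv : ℝ) (hMv : IsGreatest (f '' (C : Set (EuclideanSpace ℝ (Fin n)))) Mv)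
    (hratio : Real.sqrt N < (Mv - f x) / ‖gradient f x‖) :
    (∀ z : EuclideanSpace ℝ (Fin n), (∀ i, z i = 0 ∨ z i = 1) →
        Mv - f x ≤ ⟪gradient f x, z - x⟫ → Real.sqrt N < ‖z - x‖) ∧
    ∑ q ∈ Finset.range (N + 1), Nat.choose n q ≤
      (Finset.univ.filter
        (fun b : Fin n → Bool => ⟪gradient f x, binVec b - x⟫ < Mv - f x)).card :=
  optimality_cut_removes_points_general n N f C hCbin x hx Mv hratio
end

section
/- Dimension-reduction criterion: Let c ∈ R^n, x ∈ {0,1}^n, and define S_1^+ = {i : x_i = 1, c_i > 0}, S_0^+ = {i : x_i = 0, c_i > 0}, S_1^- = {i : x_i = 1, c_i ≤ 0}, S_0^- = {i : x_i = 0, c_i ≤ 0}. Suppose i⁺ ∈ S_1^+ satisfies c_{i⁺} > ∑_{i∈S_0^+} c_i − ∑_{i∈S_1^-} c_i. Then every z ∈ {0,1}^n with ⟨c, z⟩ ≥ ⟨c, x⟩ satisfies z_{i⁺} = 1. -/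
/-!
Changing a binary `x` into a binary `z` raises `⟨c, ·⟩` at a coordinate `i` by at most the
gain `c_i` (if `i ∈ S_0^+`) or `-c_i` (if `i ∈ S_1^-`) and by nothing otherwise, while setting
`z_{i⁺} = 0` loses `c_{i⁺}`. By hypothesis this loss exceeds the total of all gains.
-/

open Finset

/-- The largest possible increase of `c * x` when the binary value `x` is flipped. -/
noncomputable def flipGain (c x : ℝ) : ℝ :=
  (if x = 0 ∧ 0 < c then c else 0) - (if x = 1 ∧ c ≤ 0 then c else 0)

lemma flipGain_nonneg {c x : ℝ} (hx : x = 0 ∨ x = 1) : 0 ≤ flipGain c x := by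
  unfold flipGain
  rcases hx with rfl | rfl <;> split_ifs <;> norm_num at * <;> linarith

lemma mul_sub_le_flipGain {c x z : ℝ} (hx : x = 0 ∨ x = 1) (hz : z = 0 ∨ z = 1) :
    c * (z - x) ≤ flipGain c x := by
  unfold flipGain
  rcases hx with rfl | rfl <;> rcases hz with rfl | rfl <;> split_ifs <;> norm_num at * <;>
    linarith

section
variable {ι : Type*} [Fintype ι]

lemma sum_flipGain (c x : ι → ℝ) :
    ∑ i, flipGain (c i) (x i) =
      (∑ i ∈ univ.filter (fun i => x i = 0 ∧ 0 < c i), c i)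
        - ∑ i ∈ univ.filter (fun i => x i = 1 ∧ c i ≤ 0), c i := by
  simp only [flipGain, sum_sub_distrib, sum_filter]

lemma sum_mul_sub_sum_mul_le [DecidableEq ι] {c x z : ι → ℝ} (hx : ∀ i, x i = 0 ∨ x i = 1)
    (hz : ∀ i, z i = 0 ∨ z i = 1) (j : ι) :
    ∑ i, c i * z i - ∑ i, c i * x i ≤ c j * (z j - x j) + ∑ i, flipGain (c i) (x i) := by
  have hrest : ∑ i ∈ univ.erase j, c i * (z i - x i) ≤ ∑ i, flipGain (c i) (x i) :=
    calc ∑ i ∈ univ.erase j, c i * (z i - x i)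
        ≤ ∑ i ∈ univ.erase j, flipGain (c i) (x i) :=
          sum_le_sum fun i _ => mul_sub_le_flipGain (hx i) (hz i)
      _ ≤ ∑ i, flipGain (c i) (x i) :=
          sum_le_sum_of_subset_of_nonneg (erase_subset j univ)
            fun i _ _ => flipGain_nonneg (hx i)
  rw [← sum_sub_distrib, ← add_sum_erase _ _ (mem_univ j)]
  simp only [← mul_sub]
  linarith

end

open Classical in
theorem dimension_reduction_fix_one_general (n : ℕ) (c x : Fin n → ℝ)
    (hx : ∀ i, x i = 0 ∨ x i = 1)
    (ip : Fin n) (hip1 : x ip = 1)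
    (hdom : (∑ i ∈ Finset.univ.filter (fun i => x i = 0 ∧ 0 < c i), c i)
        - (∑ i ∈ Finset.univ.filter (fun i => x i = 1 ∧ c i ≤ 0), c i) < c ip) :
    ∀ z : Fin n → ℝ, (∀ i, z i = 0 ∨ z i = 1) →
      (∑ i, c i * x i) ≤ (∑ i, c i * z i) → z ip = 1 := by
  intro z hz hle
  by_contra hzip
  have hzip0 : z ip = 0 := (hz ip).resolve_right hzip
  have hgain := sum_mul_sub_sum_mul_le (c := c) hx hz ip
  rw [hzip0, hip1, sum_flipGain] at hgain
  linarith

open Classical in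
/-- Dimension-reduction criterion (first part): if the coefficient `c i⁺` (with
`x_{i⁺} = 1`, `c_{i⁺} > 0`) dominates the maximal possible gain from the remaining
indices, then every binary `z` with `⟨c,z⟩ ≥ ⟨c,x⟩` has `z_{i⁺} = 1`. -/
theorem dimension_reduction_fix_one (n : ℕ) (c x : Fin n → ℝ)
    (hx : ∀ i, x i = 0 ∨ x i = 1)
    (ip : Fin n) (hip1 : x ip = 1) (hipc : 0 < c ip)
    (hdom : (∑ i ∈ Finset.univ.filter (fun i => x i = 0 ∧ 0 < c i), c i)
        - (∑ i ∈ Finset.univ.filter (fun i => x i = 1 ∧ c i ≤ 0), c i) < c ip) :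
    ∀ z : Fin n → ℝ, (∀ i, z i = 0 ∨ z i = 1) →
      (∑ i, c i * x i) ≤ (∑ i, c i * z i) → z ip = 1 :=
  dimension_reduction_fix_one_general n c x hx ip hip1 hdom
end

section
/- Dimension-reduction criterion (second part): With c ∈ R^n, x ∈ {0,1}^n, and index sets S_1^+, S_0^+, S_1^-, S_0^- as defined (S_1^+ = {i : x_i=1, c_i>0}, S_0^+ = {i : x_i=0, c_i>0}, S_1^- = {i : x_i=1, c_i≤0}, S_0^- = {i : x_i=0, c_i≤0}), suppose i⁻ ∈ S_0^- satisfies c_{i⁻} < −∑_{i∈S_0^+} c_i + ∑_{i∈S_1^-} c_i. Then every z ∈ {0,1}^n with ⟨c, z⟩ ≥ ⟨c, x⟩ satisfies z_{i⁻} = 0. -/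
/-!
If `z_{i⁻} = 1`, then `⟨c, z⟩` is at most the sum of all positive coefficients plus `c_{i⁻}`,
i.e. `∑_{S_1^+} c + ∑_{S_0^+} c + c_{i⁻}`, which the hypothesis makes strictly smaller than
`⟨c, x⟩ = ∑_{S_1^+} c + ∑_{S_1^-} c`.
-/

open Finset

lemma mul_le_max_zero_of_mem_Icc {a t : ℝ} (ht : t ∈ Set.Icc (0 : ℝ) 1) : a * t ≤ max a 0 := by
  rcases le_total 0 a with ha | ha
  · exact (mul_le_of_le_one_right ha ht.2).trans (le_max_left a 0)
  · exact (mul_nonpos_of_nonpos_of_nonneg ha ht.1).trans (le_max_right a 0)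

section

variable {ι : Type*} [Fintype ι]

lemma sum_mul_le_sum_filter_pos_add {c z : ι → ℝ} (hz : ∀ i, z i ∈ Set.Icc (0 : ℝ) 1)
    {j : ι} (hzj : z j = 1) :
    ∑ i, c i * z i ≤ ∑ i ∈ univ.filter (fun i => 0 < c i), c i + c j := by
  classical
  rw [← add_sum_erase univ _ (mem_univ j), hzj, mul_one, add_comm]
  gcongr
  calc ∑ i ∈ univ.erase j, c i * z i
      ≤ ∑ i ∈ univ.erase j, max (c i) 0 := sum_le_sum fun i _ => mul_le_max_zero_of_mem_Icc (hz i)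
    _ ≤ ∑ i, max (c i) 0 :=
        sum_le_sum_of_subset_of_nonneg (erase_subset j univ) fun _ _ _ => le_max_right _ _
    _ = ∑ i ∈ univ.filter (fun i => 0 < c i), c i := by
        rw [sum_filter]
        refine sum_congr rfl fun i _ => ?_
        split_ifs with hc
        · exact max_eq_left hc.le
        · exact max_eq_right (not_lt.mp hc)

variable {c x : ι → ℝ}

lemma sum_mul_eq_sum_filter_pos_add_sum_filter_nonpos (hx : ∀ i, x i = 0 ∨ x i = 1) :
    ∑ i, c i * x i = ∑ i ∈ univ.filter (fun i => x i = 1 ∧ 0 < c i), c i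
      + ∑ i ∈ univ.filter (fun i => x i = 1 ∧ c i ≤ 0), c i := by
  simp only [sum_filter, ← sum_add_distrib]
  refine sum_congr rfl fun i _ => ?_
  rcases hx i with h | h
  · simp [h]
  · by_cases hc : 0 < c i
    · simp [h, hc, hc.not_ge]
    · simp [h, hc, not_lt.mp hc]

lemma sum_filter_pos_eq_add (hx : ∀ i, x i = 0 ∨ x i = 1) :
    ∑ i ∈ univ.filter (fun i => 0 < c i), c i
      = ∑ i ∈ univ.filter (fun i => x i = 1 ∧ 0 < c i), c i
        + ∑ i ∈ univ.filter (fun i => x i = 0 ∧ 0 < c i), c i := by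
  simp only [sum_filter, ← sum_add_distrib]
  refine sum_congr rfl fun i _ => ?_
  rcases hx i with h | h <;> simp [h]

end

open Classical in
theorem dimension_reduction_fix_zero_general (n : ℕ) (c x : Fin n → ℝ)
    (hx : ∀ i, x i = 0 ∨ x i = 1)
    (im : Fin n)
    (hdom : c im < -(∑ i ∈ Finset.univ.filter (fun i => x i = 0 ∧ 0 < c i), c i)
        + (∑ i ∈ Finset.univ.filter (fun i => x i = 1 ∧ c i ≤ 0), c i)) :
    ∀ z : Fin n → ℝ, (∀ i, z i = 0 ∨ z i = 1) →
      (∑ i, c i * x i) ≤ (∑ i, c i * z i) → z im = 0 := by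
  intro z hz hle
  by_contra hzim
  have hz_Icc : ∀ i, z i ∈ Set.Icc (0 : ℝ) 1 := fun i => by rcases hz i with h | h <;> simp [h]
  have hz_le := sum_mul_le_sum_filter_pos_add (c := c) hz_Icc ((hz im).resolve_left hzim)
  rw [sum_filter_pos_eq_add hx] at hz_le
  rw [sum_mul_eq_sum_filter_pos_add_sum_filter_nonpos hx] at hle
  linarith

open Classical in
/-- Dimension-reduction criterion (second part): if the coefficient `c i⁻` (with
`x_{i⁻} = 0`, `c_{i⁻} ≤ 0`) is strictly below the minimal possible change from the
remaining indices, then every binary `z` with `⟨c,z⟩ ≥ ⟨c,x⟩` has `z_{i⁻} = 0`. -/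
theorem dimension_reduction_fix_zero (n : ℕ) (c x : Fin n → ℝ)
    (hx : ∀ i, x i = 0 ∨ x i = 1)
    (im : Fin n) (him0 : x im = 0) (himc : c im ≤ 0)
    (hdom : c im < -(∑ i ∈ Finset.univ.filter (fun i => x i = 0 ∧ 0 < c i), c i)
        + (∑ i ∈ Finset.univ.filter (fun i => x i = 1 ∧ c i ≤ 0), c i)) :
    ∀ z : Fin n → ℝ, (∀ i, z i = 0 ∨ z i = 1) →
      (∑ i, c i * x i) ≤ (∑ i, c i * z i) → z im = 0 :=
  dimension_reduction_fix_zero_general n c x hx im hdom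
end
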